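/- Let (R, R⁺) be an analytic perfectoid pair of characteristic p with ideal of definition (x_0, ..., x_m) ⊂ R⁺. Then the Gauss norm |∑_{n≥0} p^n [x̄_n]| = sup_n |x̄_n| on W(R⁺) induces the ([x_0], ..., [x_m])-adic topology on W(R⁺); and the weighted Gauss norm |∑ p^n [x̄_n]|_ρ = sup_n ρ^{-n}|x̄_n| (for ρ ∈ (0,1)) induces the (p, [x_0], ..., [x_m])-adic topology. -/

import Mathlib

/-!
Write a Witt vector over the perfect ring `S` as `w = ∑ pⁿ [tₙ]`, so `wₙ = tₙ ^ pⁿ`.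

The basic tool is a Rees-ring trick: if `κ` is a multiplicative filtration of `S` with
`κ 0 = S`, then `[X] * w` has all coordinates in the Rees ring `⊕ κ_d X^d ⊆ S[X]` exactly when
`wₙ ∈ κ (pⁿ)` for all `n`. Since Witt vectors over a subring form a subring, these `w` form an
ideal of `W(S)`.

For `κ` a family of norm balls this makes the balls of the (weighted) Gauss norm into ideals.
Multiplying by `[xᵢ]` scales such a ball by `|xᵢ| < 1` and multiplying by `p` scales it by `ρ`,
so the powers of `([xᵢ])`, resp. `(p, [xᵢ])`, have small Gauss norm.

Conversely, suppose every `tₙ` lies in `(x)^((m+1)N)`, and take for `κ` the Frobenius-saturated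
powers of `(x)`. By pigeonhole, `w₀ = ∑ xᵢᴺ sᵢ` with each `xᵢᴺ sᵢ` still at level `(m+1)N`. So
`w - ∑ [xᵢ]ᴺ [sᵢ] = p w'`, where `w'` satisfies the same hypothesis. Iterating gives a
`p`-adically convergent expansion `w = ∑ [xᵢ]ᴺ Vᵢ`.
-/

namespace Ideal

open MvPolynomial in
theorem exists_eq_sum_pow_mul_of_mem_span_pow {R ι : Type*} [CommRing R] [Fintype ι]
    [Nonempty ι] (x : ι → R) {M e : ℕ} (he : Fintype.card ι * M ≤ e) {y : R}
    (hy : y ∈ span (Set.range x) ^ e) :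
    ∃ r : ι → R, (∀ i, r i ∈ span (Set.range x) ^ (e - M)) ∧ y = ∑ i, x i ^ M * r i := by
  classical
  suffices y ∈ ⨆ i, span {x i ^ M} * span (Set.range x) ^ (e - M) by
    obtain ⟨f, hf, rfl⟩ := (Submodule.mem_iSup_iff_exists_finsupp _ _).1 this
    choose r hr hfr using fun i => Submodule.mem_span_singleton_mul.1 (hf i)
    exact ⟨r, hr, by rw [Finsupp.sum_fintype _ _ fun _ => rfl]; simp [hfr]⟩
  obtain ⟨P, hP, rfl⟩ := (mem_span_pow_iff_exists_isHomogeneous x y).1 hy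
  rw [P.as_sum, map_sum]
  refine sum_mem _ fun d hd => ?_
  have hdeg : Finsupp.degree d = e := by
    rw [Finsupp.degree_eq_weight_one]; exact hP (mem_support_iff.1 hd)
  obtain ⟨i, -, hi⟩ := Finset.exists_le_of_sum_le (f := fun _ => M) (g := fun i => d i)
    Finset.univ_nonempty (by simpa [← Finsupp.degree_eq_sum, hdeg] using he)
  obtain ⟨d', rfl⟩ : ∃ d', d = Finsupp.single i M + d' :=
    ⟨d - Finsupp.single i M, (add_tsub_cancel_of_le (Finsupp.single_le_iff.2 hi)).symm⟩
  rw [← one_mul (coeff _ P), ← monomial_mul, map_mul]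
  refine Submodule.mem_iSup_of_mem i (mul_mem_mul ?_ ?_)
  · simp [eval_monomial]
  · refine (mem_span_pow_iff_exists_isHomogeneous x _).2 ⟨_, isHomogeneous_monomial _ ?_, rfl⟩
    rw [map_add, Finsupp.degree_single] at hdeg
    omega

theorem span_pow_le_of_forall_mul_mem {R : Type*} [CommSemiring R] {s : Set R} {B : ℕ → Ideal R}
    (h0 : B 0 = ⊤) (hs : ∀ g ∈ s, ∀ K, ∀ y ∈ B K, g * y ∈ B (K + 1)) (K : ℕ) :
    span s ^ K ≤ B K := by
  induction K with
  | zero => simp [h0]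
  | succ K ih =>
    rw [pow_succ', mul_le]
    intro r hr y hy
    induction hr using Submodule.span_induction with
    | mem g hg => exact hs g hg K y (ih hy)
    | zero => simp
    | add a b _ _ ha hb => rw [add_mul]; exact add_mem ha hb
    | smul a b _ hb => rw [smul_eq_mul, mul_assoc]; exact mul_mem_left _ _ hb

section PerfPow

variable {S : Type*} [CommRing S]

theorem pow_p_pow_mem_pow_of_le {p : ℕ} {J : Ideal S} {d k l : ℕ} {a : S}
    (ha : a ^ p ^ k ∈ J ^ (d * p ^ k)) (hkl : k ≤ l) : a ^ p ^ l ∈ J ^ (d * p ^ l) := by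
  obtain ⟨j, rfl⟩ := Nat.exists_eq_add_of_le hkl
  rw [pow_add, pow_mul a, ← mul_assoc, pow_mul J]
  exact pow_mem_pow ha _

variable (p : ℕ) [Fact p.Prime] [CharP S p]

-- For `J = (x₀, …, x_m)` in a perfect ring, this is the ideal generated by the monomials in the
-- `xᵢ ^ (1 / p ^ k)` of total degree at least `d`.
def perfPow (J : Ideal S) (d : ℕ) : Ideal S where
  carrier := {a | ∃ k, a ^ p ^ k ∈ J ^ (d * p ^ k)}
  zero_mem' := ⟨0, by simp⟩
  add_mem' := by
    rintro a b ⟨k, ha⟩ ⟨l, hb⟩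
    refine ⟨k + l, ?_⟩
    rw [add_pow_char_pow]
    exact add_mem (pow_p_pow_mem_pow_of_le ha (by omega))
      (pow_p_pow_mem_pow_of_le hb (by omega))
  smul_mem' := by
    rintro c a ⟨k, ha⟩
    exact ⟨k, by rw [smul_eq_mul, mul_pow]; exact mul_mem_left _ _ ha⟩

variable {p}

theorem perfPow_zero (J : Ideal S) : J.perfPow p 0 = ⊤ :=
  eq_top_iff_one _ |>.2 ⟨0, by simp⟩

theorem pow_le_perfPow (J : Ideal S) (d : ℕ) : J ^ d ≤ J.perfPow p d :=
  fun a ha => ⟨0, by simpa using ha⟩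

theorem mul_mem_perfPow {J : Ideal S} {d e : ℕ} {a b : S} (ha : a ∈ J.perfPow p d)
    (hb : b ∈ J.perfPow p e) : a * b ∈ J.perfPow p (d + e) := by
  obtain ⟨k, ha⟩ := ha
  obtain ⟨l, hb⟩ := hb
  refine ⟨k + l, ?_⟩
  rw [mul_pow, add_mul, pow_add]
  exact mul_mem_mul (pow_p_pow_mem_pow_of_le ha (by omega))
    (pow_p_pow_mem_pow_of_le hb (by omega))

theorem mem_perfPow_of_pow_mem {J : Ideal S} {d : ℕ} {a : S}
    (ha : a ^ p ∈ J.perfPow p (d * p)) : a ∈ J.perfPow p d := by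
  obtain ⟨k, ha⟩ := ha
  exact ⟨k + 1, by rwa [pow_succ', pow_mul a, ← mul_assoc]⟩

theorem exists_eq_sum_pow_mul_of_mem_perfPow [PerfectRing S p] {ι : Type*} [Fintype ι]
    [Nonempty ι] (x : ι → S) {N c : ℕ} (hc : Fintype.card ι * N ≤ c) {a : S}
    (ha : a ∈ (span (Set.range x)).perfPow p c) :
    ∃ s : ι → S, (∀ i, s i ∈ (span (Set.range x)).perfPow p (c - N)) ∧
      a = ∑ i, x i ^ N * s i := by
  obtain ⟨k, hk⟩ := ha
  obtain ⟨r, hr, hsum⟩ := exists_eq_sum_pow_mul_of_mem_span_pow x (M := N * p ^ k)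
    (by rw [← mul_assoc]; exact Nat.mul_le_mul_right _ hc) hk
  let ψ := (iterateFrobeniusEquiv S p k).symm
  have hψ : ∀ y, ψ (y ^ p ^ k) = y := (iterateFrobeniusEquiv S p k).symm_apply_apply
  refine ⟨fun i => ψ (r i), fun i => ⟨k, ?_⟩, ?_⟩
  · rw [← iterateFrobeniusEquiv_def, RingEquiv.apply_symm_apply, Nat.sub_mul]
    exact hr i
  · rw [← hψ a, hsum, map_sum]
    simp only [map_mul, pow_mul, hψ]

end PerfPow

end Ideal

section SubLeMax

variable {S : Type*} [CommRing S] {f : S → ℝ}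

theorem apply_neg_of_sub_le_max (hnonneg : ∀ s, 0 ≤ f s) (h0 : f 0 = 0)
    (hna : ∀ s t, f (s - t) ≤ max (f s) (f t)) (s : S) : f (-s) = f s :=
  le_antisymm (by simpa [h0, hnonneg] using hna 0 s) (by simpa [h0, hnonneg] using hna 0 (-s))

theorem isNonarchimedean_of_sub_le_max (hnonneg : ∀ s, 0 ≤ f s) (h0 : f 0 = 0)
    (hna : ∀ s t, f (s - t) ≤ max (f s) (f t)) : IsNonarchimedean f := fun a b => by
  simpa [apply_neg_of_sub_le_max hnonneg h0 hna] using hna a (-b)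

def RingSeminorm.ofSubLeMax (hnonneg : ∀ s, 0 ≤ f s) (h0 : f 0 = 0)
    (hna : ∀ s t, f (s - t) ≤ max (f s) (f t)) (hmul : ∀ s t, f (s * t) ≤ f s * f t) :
    RingSeminorm S where
  toFun := f
  map_zero' := h0
  add_le' r s := (isNonarchimedean_of_sub_le_max hnonneg h0 hna r s).trans
    (max_le_add_of_nonneg (hnonneg r) (hnonneg s))
  neg' := apply_neg_of_sub_le_max hnonneg h0 hna
  mul_le' := hmul

@[simp]
theorem RingSeminorm.coe_ofSubLeMax (hnonneg : ∀ s, 0 ≤ f s) (h0 : f 0 = 0)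
    (hna : ∀ s t, f (s - t) ≤ max (f s) (f t)) (hmul : ∀ s t, f (s * t) ≤ f s * f t) :
    ⇑(RingSeminorm.ofSubLeMax hnonneg h0 hna hmul) = f :=
  rfl

end SubLeMax

theorem exists_forall_le_lt_one_of_span_pow {ι S : Type*} [Finite ι] [Nonempty ι] [CommRing S]
    {f : S → ℝ} (hnonneg : ∀ s, 0 ≤ f s) (hpm : IsPowMul f) (x : ι → S) {N : ℕ}
    (hN : ∀ s ∈ Ideal.span (Set.range x) ^ N, f s < 1) :
    ∃ ε, 0 ≤ ε ∧ ε < 1 ∧ ∀ i, f (x i) ≤ ε := by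
  obtain ⟨i₀, hi₀⟩ := Finite.exists_max fun i => f (x i)
  refine ⟨f (x i₀), hnonneg _, ?_, hi₀⟩
  have := hN _ (Ideal.pow_le_pow_right N.le_succ
    (Ideal.pow_mem_pow (Ideal.subset_span (Set.mem_range_self i₀)) _))
  rwa [hpm _ N.succ_pos, pow_lt_one_iff_of_nonneg (hnonneg _) N.succ_ne_zero] at this

namespace WittVector

variable {p : ℕ}

local notation "𝕎" => WittVector p

section TeichmullerSeries

variable {A : Type*} [CommRing A]

-- In characteristic `p` this is `∑ pⁿ [s n]`, see `teichmullerSeries_eq_teichmuller_add`.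
variable (p) in
def teichmullerSeries (s : ℕ → A) : 𝕎 A :=
  mk p fun n => s n ^ p ^ n

theorem teichmullerSeries_iterate_invFun (hA : Function.Surjective fun a : A => a ^ p)
    (w : 𝕎 A) :
    teichmullerSeries p (fun n => (Function.invFun fun a : A => a ^ p)^[n] (w.coeff n)) = w := by
  ext n
  simpa [teichmullerSeries, pow_iterate] using
    (Function.rightInverse_invFun hA).iterate n (w.coeff n)

end TeichmullerSeries

variable [hp : Fact p.Prime]

section CommRing

variable {A : Type*} [CommRing A]

open MvPolynomial in
theorem teichmuller_mul_coeff (c : A) (w : 𝕎 A) (n : ℕ) :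
    (teichmuller p c * w).coeff n = c ^ p ^ n * w.coeff n := by
  let X₀ : MvPolynomial (Option ℕ) ℤ := X none
  let u : 𝕎 (MvPolynomial (Option ℕ) ℤ) := mk p fun i => X (some i)
  have key : teichmuller p X₀ * u = mk p fun i => X₀ ^ p ^ i * u.coeff i := by
    apply map_injective (MvPolynomial.map (Int.castRingHom ℚ))
      (MvPolynomial.map_injective _ Int.cast_injective)
    apply (ghostMap.bijective_of_invertible p (MvPolynomial (Option ℕ) ℚ)).1
    funext n
    simp only [map_mul, map_teichmuller, ghostMap_apply, ghostComponent_teichmuller]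
    simp only [ghostComponent_apply, aeval_wittPolynomial, map_coeff, coeff_mk, Finset.mul_sum,
      map_mul, map_pow, MvPolynomial.map_X, u, X₀]
    refine Finset.sum_congr rfl fun i hi => ?_
    rw [mul_pow, ← pow_mul, ← pow_add, Nat.add_sub_cancel' (Nat.lt_succ_iff.mp
      (Finset.mem_range.mp hi))]
    ring
  let e : MvPolynomial (Option ℕ) ℤ →+* A :=
    eval₂Hom (Int.castRingHom A) (Option.elim · c w.coeff)
  have hu : map e u = w := by ext i; simp [e, u, map_coeff]
  have := congrArg (fun z => (map e z).coeff n) key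
  rw [map_mul, map_teichmuller, hu] at this
  simpa [X₀, e, u, map_coeff] using this

theorem mem_range_map_subtype_iff (T : Subring A) (u : 𝕎 A) :
    u ∈ (map T.subtype).range ↔ ∀ n, u.coeff n ∈ T := by
  refine ⟨?_, fun hu => ⟨mk p fun n => ⟨u.coeff n, hu n⟩, by ext n; simp [map_coeff]⟩⟩
  rintro ⟨v, rfl⟩ n
  simp [map_coeff]

end CommRing

section Filtration

open Polynomial

variable {A : Type*} [CommRing A] (κ : ℕ → AddSubgroup A) (hκ : ∀ a, a ∈ κ 0)
  (hmul : ∀ {i j a b}, a ∈ κ i → b ∈ κ j → a * b ∈ κ (i + j))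

def reesSubring : Subring A[X] where
  carrier := {f | ∀ k, f.coeff k ∈ κ k}
  zero_mem' k := by simp [zero_mem]
  one_mem' k := by
    rw [coeff_one]
    split_ifs with h
    · exact h ▸ hκ 1
    · exact zero_mem _
  add_mem' hf hg k := by rw [coeff_add]; exact add_mem (hf k) (hg k)
  neg_mem' hf k := by rw [coeff_neg]; exact neg_mem (hf k)
  mul_mem' {f g} hf hg k := by
    rw [coeff_mul]
    refine sum_mem fun ij hij => ?_
    rw [← Finset.HasAntidiagonal.mem_antidiagonal.mp hij]
    exact hmul (hf ij.1) (hg ij.2)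

theorem monomial_mem_reesSubring_iff {a : A} {d : ℕ} :
    monomial d a ∈ reesSubring κ hκ hmul ↔ a ∈ κ d := by
  refine ⟨fun h => by simpa using h d, fun h k => ?_⟩
  rw [coeff_monomial]
  split_ifs with hk
  · exact hk ▸ h
  · exact zero_mem _

theorem coeff_mem_iff_teichmuller_X_mul_mem (w : 𝕎 A) :
    (∀ n, w.coeff n ∈ κ (p ^ n)) ↔
      teichmuller p X * map C w ∈ (map (reesSubring κ hκ hmul).subtype).range := by
  simp only [mem_range_map_subtype_iff, teichmuller_mul_coeff, map_coeff, mul_comm (X ^ _),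
    C_mul_X_pow_eq_monomial, monomial_mem_reesSubring_iff]

variable (p) in
def wittFiltration : Ideal (𝕎 A) where
  carrier := {w | ∀ n, w.coeff n ∈ κ (p ^ n)}
  zero_mem' n := by rw [zero_coeff]; exact zero_mem _
  add_mem' {w v} hw hv := by
    rw [Set.mem_ofPred_eq, coeff_mem_iff_teichmuller_X_mul_mem κ hκ hmul] at *
    rw [map_add, mul_add]
    exact add_mem hw hv
  smul_mem' c w hw := by
    rw [Set.mem_ofPred_eq, coeff_mem_iff_teichmuller_X_mul_mem κ hκ hmul] at *
    rw [smul_eq_mul, map_mul, mul_left_comm]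
    refine mul_mem ((mem_range_map_subtype_iff _ _).2 fun n => ?_) hw
    rw [map_coeff, ← monomial_zero_left, monomial_mem_reesSubring_iff]
    exact hκ _

variable {κ hκ hmul}

theorem teichmuller_mem_wittFiltration {t : A} (ht : t ∈ κ 1) :
    teichmuller p t ∈ wittFiltration p κ hκ hmul := by
  rintro (_ | n)
  · simpa using ht
  · rw [teichmuller_coeff_pos p t _ n.succ_pos]
    exact zero_mem _

end Filtration

section CharP

variable {A : Type*} [CommRing A] [CharP A p]

theorem eq_zero_of_forall_p_pow_dvd {z : 𝕎 A} (h : ∀ k, (p : 𝕎 A) ^ k ∣ z) : z = 0 := by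
  ext n
  obtain ⟨y, rfl⟩ := h (n + 1)
  rw [mul_comm, mul_pow_charP_coeff_zero _ n.lt_succ_self, zero_coeff]

theorem teichmullerSeries_eq_teichmuller_add (s : ℕ → A) :
    teichmullerSeries p s =
      teichmuller p (s 0) + p * teichmullerSeries p (fun n => s (n + 1)) := by
  ext n
  rw [coeff_add_of_disjoint, mul_comm]
  · rcases n with _ | n
    · simp [teichmullerSeries, mul_charP_coeff_zero]
    · rw [teichmuller_coeff_pos p _ _ n.succ_pos, mul_charP_coeff_succ]
      simp [teichmullerSeries, ← pow_mul, pow_succ]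
  · rintro (_ | n)
    · exact Or.inr (by rw [mul_comm]; exact mul_charP_coeff_zero _)
    · exact Or.inl (teichmuller_coeff_pos p _ _ n.succ_pos)

theorem teichmullerSeries_eq_add_p_pow_mul (t : ℕ → A) (N : ℕ) :
    teichmullerSeries p t = teichmullerSeries p (fun n => if n < N then t n else 0) +
      p ^ N * teichmullerSeries p (fun n => t (n + N)) := by
  have hpn : ∀ n, p ^ n ≠ 0 := fun n => pow_ne_zero n hp.out.ne_zero
  have h₁ : ∀ n, (teichmullerSeries p fun n => if n < N then t n else 0).coeff n =
      if n < N then t n ^ p ^ n else 0 := fun n => by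
    unfold teichmullerSeries
    split_ifs <;> simp [*, zero_pow (hpn n)]
  have h₂ : ∀ n, ((p : 𝕎 A) ^ N * teichmullerSeries p fun n => t (n + N)).coeff n =
      if n < N then 0 else t n ^ p ^ n := fun n => by
    rw [mul_comm]
    split_ifs with hn
    · exact mul_pow_charP_coeff_zero _ hn
    · obtain ⟨k, rfl⟩ := Nat.exists_eq_add_of_le' (not_lt.1 hn)
      simp [mul_pow_charP_coeff_succ, teichmullerSeries, ← pow_mul, ← pow_add]
  ext n
  rw [coeff_add_of_disjoint _ _ _ fun n => by by_cases hn : n < N <;> simp [h₁, h₂, hn],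
    h₁, h₂]
  split_ifs <;> simp [teichmullerSeries]

theorem mem_span_of_forall_eq_add_p_mul {ι : Type*} [Fintype ι] {P : Set (𝕎 A)} (g : ι → 𝕎 A)
    (h : ∀ v ∈ P, ∃ s : ι → A, ∃ v' ∈ P, v = ∑ i, g i * teichmuller p (s i) + p * v')
    {v : 𝕎 A} (hv : v ∈ P) : v ∈ Ideal.span (Set.range g) := by
  choose! s v' hv'P hv' using h
  let u : ℕ → 𝕎 A := fun k => v'^[k] v
  have hu : ∀ k, u k ∈ P := fun k => by
    induction k with
    | zero => exact hv
    | succ k ih => simpa [u, Function.iterate_succ_apply'] using hv'P _ ih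
  let V : ℕ → ι → 𝕎 A := fun k i => teichmullerSeries p fun j => s (u (j + k)) i
  -- `z k` is the error left after `k` steps; it is divisible by every power of `p`.
  let z : ℕ → 𝕎 A := fun k => u k - ∑ i, g i * V k i
  have hz : ∀ k, z k = p * z (k + 1) := fun k => by
    have hV : ∀ i, V k i = teichmuller p (s (u k) i) + p * V (k + 1) i := fun i => by
      simp only [V, teichmullerSeries_eq_teichmuller_add (fun j => s (u (j + k)) i), zero_add,
        add_assoc, add_comm 1 k]
    have huk : v' (u k) = u (k + 1) := (Function.iterate_succ_apply' _ _ _).symm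
    have e := hv' _ (hu k)
    rw [huk] at e
    simp only [z, hV, mul_add, Finset.sum_add_distrib, Finset.mul_sum, mul_sub,
      mul_left_comm _ (p : 𝕎 A)]
    linear_combination e
  have hz0 : z 0 = 0 := by
    refine eq_zero_of_forall_p_pow_dvd fun k => ⟨z k, ?_⟩
    induction k with
    | zero => rw [pow_zero, one_mul]
    | succ k ih => rw [ih, hz k, pow_succ, mul_assoc]
  have hv0 : v = ∑ i, g i * V 0 i := sub_eq_zero.mp hz0
  rw [hv0]
  exact sum_mem fun i _ => Ideal.mul_mem_right _ _ (Ideal.subset_span ⟨i, rfl⟩)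

end CharP

section Perfect

open Ideal

variable {S : Type*} [CommRing S] [CharP S p] [PerfectRing S p]

theorem mem_span_teichmuller_pow_of_coeff_mem_perfPow {ι : Type*} [Fintype ι] [Nonempty ι]
    (x : ι → S) (N : ℕ) {w : 𝕎 S}
    (hw : ∀ n, w.coeff n ∈ (span (Set.range x)).perfPow p (Fintype.card ι * N * p ^ n)) :
    w ∈ span (Set.range fun i => teichmuller p (x i)) ^ N := by
  set J := span (Set.range x)
  set c := Fintype.card ι * N
  have hNc : N ≤ c := Nat.le_mul_of_pos_left N Fintype.card_pos
  let F := wittFiltration p (fun d => (J.perfPow p (c * d)).toAddSubgroup)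
    (fun a => by simp [perfPow_zero])
    (fun ha hb => by rw [mul_add]; exact mul_mem_perfPow ha hb)
  have step : ∀ v ∈ F, ∃ s : ι → S, ∃ v' ∈ F,
      v = ∑ i, teichmuller p (x i) ^ N * teichmuller p (s i) + p * v' := by
    intro v hv
    obtain ⟨s, hs, hv0⟩ := exists_eq_sum_pow_mul_of_mem_perfPow x le_rfl (by simpa using hv 0)
    let a := ∑ i, teichmuller p (x i ^ N * s i)
    have ha : a ∈ F := sum_mem _ fun i _ => teichmuller_mem_wittFiltration <| by
      have := mul_mem_perfPow (pow_le_perfPow J N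
        (pow_mem_pow (subset_span (Set.mem_range_self i)) N)) (hs i)
      rwa [Nat.add_sub_cancel' hNc, ← mul_one c] at this
    have hva : (v - a).coeff 0 = 0 := by
      rw [← constantCoeff_apply, map_sub, map_sum]
      simp only [constantCoeff_apply, teichmuller_coeff_zero, hv0, sub_self]
    obtain ⟨u, hu⟩ := mem_span_singleton'.1 ((mem_span_p_iff_coeff_zero_eq_zero _).2 hva)
    refine ⟨s, u, fun n => mem_perfPow_of_pow_mem ?_, ?_⟩
    · have := sub_mem hv ha (n + 1)
      rw [← hu, mul_charP_coeff_succ, pow_succ] at this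
      simpa [mul_assoc] using this
    · simp only [← map_pow, ← map_mul]
      linear_combination -hu
  have hspan : span (Set.range fun i => teichmuller p (x i) ^ N) ≤
      span (Set.range fun i => teichmuller p (x i)) ^ N :=
    span_le.2 <| Set.range_subset_iff.2 fun i =>
      pow_mem_pow (subset_span (Set.mem_range_self i)) N
  exact hspan (mem_span_of_forall_eq_add_p_mul _ step hw)

theorem teichmullerSeries_mem_span_teichmuller_pow {ι : Type*} [Fintype ι] [Nonempty ι]
    (x : ι → S) (N : ℕ) {t : ℕ → S}
    (ht : ∀ n, t n ∈ span (Set.range x) ^ (Fintype.card ι * N)) :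
    teichmullerSeries p t ∈ span (Set.range fun i => teichmuller p (x i)) ^ N :=
  mem_span_teichmuller_pow_of_coeff_mem_perfPow x N fun n =>
    pow_le_perfPow _ _ (by rw [pow_mul]; exact pow_mem_pow (ht n) _)

theorem teichmullerSeries_mem_span_insert_p_pow {ι : Type*} [Fintype ι] [Nonempty ι]
    (x : ι → S) (N : ℕ) {t : ℕ → S}
    (ht : ∀ n < N, t n ∈ span (Set.range x) ^ (Fintype.card ι * N)) :
    teichmullerSeries p t ∈
      span (insert (p : 𝕎 S) (Set.range fun i => teichmuller p (x i))) ^ N := by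
  rw [teichmullerSeries_eq_add_p_pow_mul t N]
  refine add_mem (pow_right_mono (span_mono (Set.subset_insert _ _)) N
    (teichmullerSeries_mem_span_teichmuller_pow x N fun n => ?_))
    (mul_mem_right _ _ (pow_mem_pow (subset_span (Set.mem_insert _ _)) N))
  split_ifs with hn
  exacts [ht n hn, zero_mem _]

end Perfect

section GaussBall

variable {S : Type*} [CommRing S]

-- For `w = ∑ pⁿ [tₙ]` and power-multiplicative `f`, this is the ball `sup ρⁿ f(tₙ) ≤ c`,
-- see `teichmullerSeries_mem_gaussBall_iff`.
variable (p) in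
def gaussBall (f : S → ℝ) (ρ c : ℝ) : Set (𝕎 S) :=
  {w | ∀ n, f (w.coeff n) ≤ (c / ρ ^ n) ^ p ^ n}

variable (f : RingSeminorm S)

theorem teichmuller_mul_mem_gaussBall {ρ c θ : ℝ} {t : S} (ht : f t ≤ θ) {w : 𝕎 S}
    (hw : w ∈ gaussBall p f ρ c) : teichmuller p t * w ∈ gaussBall p f ρ (θ * c) := by
  intro n
  rw [teichmuller_mul_coeff, mul_div_assoc, mul_pow]
  refine (map_mul_le_mul f _ _).trans (mul_le_mul ?_ (hw n) (apply_nonneg f _)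
    (pow_nonneg ((apply_nonneg f t).trans ht) _))
  exact (map_pow_le_pow f t (pow_ne_zero _ hp.out.ne_zero)).trans
    (pow_le_pow_left₀ (apply_nonneg f t) ht _)

theorem p_mul_mem_gaussBall [CharP S p] {ρ c θ : ℝ} (hρ : 0 < ρ) (hρθ : ρ ≤ θ) (hc : 0 ≤ c)
    {w : 𝕎 S} (hw : w ∈ gaussBall p f ρ c) : (p : 𝕎 S) * w ∈ gaussBall p f ρ (θ * c) := by
  have hθ : 0 ≤ θ := hρ.le.trans hρθ
  rintro (_ | n)
  · rw [mul_comm, mul_charP_coeff_zero, map_zero]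
    positivity
  · rw [mul_comm, mul_charP_coeff_succ]
    calc f (w.coeff n ^ p) ≤ f (w.coeff n) ^ p := map_pow_le_pow f _ hp.out.ne_zero
      _ ≤ ((c / ρ ^ n) ^ p ^ n) ^ p := pow_le_pow_left₀ (apply_nonneg f _) (hw n) p
      _ = (ρ * c / ρ ^ (n + 1)) ^ p ^ (n + 1) := by
        rw [← pow_mul, ← pow_succ, pow_succ' ρ, mul_div_mul_left _ _ hρ.ne']
      _ ≤ (θ * c / ρ ^ (n + 1)) ^ p ^ (n + 1) := by gcongr

theorem teichmullerSeries_mem_gaussBall_iff (hpm : IsPowMul f) {ρ c : ℝ} (hρ : 0 < ρ)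
    (hc : 0 ≤ c) (t : ℕ → S) :
    teichmullerSeries p t ∈ gaussBall p f ρ c ↔ ∀ n, ρ ^ n * f (t n) ≤ c := by
  refine forall_congr' fun n => ?_
  rw [teichmullerSeries, coeff_mk, hpm _ (Nat.one_le_pow _ _ hp.out.pos),
    pow_le_pow_iff_left₀ (apply_nonneg f _) (by positivity) (pow_ne_zero _ hp.out.ne_zero),
    le_div_iff₀' (pow_pos hρ n)]

def closedBallAddSubgroup (hf : IsNonarchimedean f) {r : ℝ} (hr : 0 ≤ r) :
    AddSubgroup S where
  carrier := {s | f s ≤ r}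
  zero_mem' := by simpa using hr
  add_mem' ha hb := (hf _ _).trans (max_le ha hb)
  neg_mem' ha := by simpa using ha

-- Only the radii at `d = pⁿ` matter; the others are chosen to make the balls multiplicative.
variable (p) in
noncomputable def gaussBallIdeal (hf : IsNonarchimedean f) (hf1 : ∀ s, f s ≤ 1) {ρ c : ℝ}
    (hρ : 0 < ρ) (hρ1 : ρ ≤ 1) (hc : 0 ≤ c) : Ideal (𝕎 S) :=
  have hr : ∀ {i j}, i ≤ j → c / ρ ^ Nat.log p i ≤ c / ρ ^ Nat.log p j := fun hij =>
    div_le_div_of_nonneg_left hc (pow_pos hρ _)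
      (pow_le_pow_of_le_one hρ.le hρ1 (Nat.log_mono_right hij))
  wittFiltration p (fun d => closedBallAddSubgroup f hf (r := (c / ρ ^ Nat.log p d) ^ d)
      (by positivity))
    (fun a => show f a ≤ _ by simpa using hf1 a)
    (fun {i j a b} ha hb => by
      calc f (a * b) ≤ f a * f b := map_mul_le_mul f a b
        _ ≤ (c / ρ ^ Nat.log p i) ^ i * (c / ρ ^ Nat.log p j) ^ j :=
          mul_le_mul ha hb (apply_nonneg f b) (by positivity)
        _ ≤ (c / ρ ^ Nat.log p (i + j)) ^ i * (c / ρ ^ Nat.log p (i + j)) ^ j :=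
          mul_le_mul (pow_le_pow_left₀ (by positivity) (hr le_self_add) i)
            (pow_le_pow_left₀ (by positivity) (hr le_add_self) j) (by positivity)
            (by positivity)
        _ = _ := (pow_add _ _ _).symm)

theorem coe_gaussBallIdeal (hf : IsNonarchimedean f) (hf1 : ∀ s, f s ≤ 1) {ρ c : ℝ}
    (hρ : 0 < ρ) (hρ1 : ρ ≤ 1) (hc : 0 ≤ c) :
    (gaussBallIdeal p f hf hf1 hρ hρ1 hc : Set (𝕎 S)) = gaussBall p f ρ c := by
  ext w
  refine forall_congr' fun n => ?_
  simp [closedBallAddSubgroup, Nat.log_pow hp.out.one_lt]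

theorem span_pow_subset_gaussBall (hf : IsNonarchimedean f) (hf1 : ∀ s, f s ≤ 1) {ρ θ : ℝ}
    (hρ : 0 < ρ) (hρ1 : ρ ≤ 1) (hθ : 0 ≤ θ) {s : Set (𝕎 S)}
    (hs : ∀ g ∈ s, ∀ c, 0 ≤ c → ∀ w ∈ gaussBall p f ρ c, g * w ∈ gaussBall p f ρ (θ * c))
    (K : ℕ) : ((Ideal.span s ^ K : Ideal (𝕎 S)) : Set (𝕎 S)) ⊆ gaussBall p f ρ (θ ^ K) := by
  let B K := gaussBallIdeal p f hf hf1 hρ hρ1 (pow_nonneg hθ K)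
  have hB : ∀ K w, w ∈ B K ↔ w ∈ gaussBall p f ρ (θ ^ K) := fun K w => by
    rw [← SetLike.mem_coe, coe_gaussBallIdeal]
  refine fun w hw => (hB K w).1 (Ideal.span_pow_le_of_forall_mul_mem ?_ ?_ K hw)
  · refine eq_top_iff.2 fun w _ => (hB 0 w).2 fun n => (hf1 _).trans ?_
    rw [pow_zero]
    exact one_le_pow₀ ((one_le_div (pow_pos hρ n)).2 (pow_le_one₀ hρ.le hρ1))
  · intro g hg K y hy
    rw [hB, pow_succ'] at *
    exact hs g hg _ (pow_nonneg hθ K) y hy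

theorem iSup_mul_le_of_teichmullerSeries_mem_span_pow (hf : IsNonarchimedean f)
    (hf1 : ∀ s, f s ≤ 1) (hpm : IsPowMul f) {ρ θ : ℝ} (hρ : 0 < ρ) (hρ1 : ρ ≤ 1) (hθ : 0 ≤ θ)
    {s : Set (𝕎 S)}
    (hs : ∀ g ∈ s, ∀ c, 0 ≤ c → ∀ w ∈ gaussBall p f ρ c, g * w ∈ gaussBall p f ρ (θ * c))
    {K : ℕ} {t : ℕ → S} (ht : teichmullerSeries p t ∈ Ideal.span s ^ K) :
    ⨆ n, ρ ^ n * f (t n) ≤ θ ^ K :=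
  ciSup_le <| (teichmullerSeries_mem_gaussBall_iff f hpm hρ (pow_nonneg hθ K) t).1
    (span_pow_subset_gaussBall f hf hf1 hρ hρ1 hθ hs K ht)

end GaussBall

end WittVector

open Filter

theorem stmt16_general (p : ℕ) [Fact p.Prime] {S : Type*} [CommRing S] [CharP S p]
    -- S = R⁺, a perfect uniform Banach ring with all elements of norm ≤ 1
    (nm : S → ℝ) (hnonneg : ∀ s, 0 ≤ nm s) (heq0 : ∀ s, nm s = 0 ↔ s = 0)
    (hna : ∀ s t, nm (s - t) ≤ max (nm s) (nm t))
    (hsm : ∀ s t, nm (s * t) ≤ nm s * nm t)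
    (hpm : ∀ (s : S) (n : ℕ), 1 ≤ n → nm (s ^ n) = nm s ^ n)
    (hle1 : ∀ s, nm s ≤ 1)
    (hperfS : Function.Bijective fun s : S => s ^ p)
    (m : ℕ) (x : Fin (m + 1) → S)
    -- (x₀,…,x_m) is an ideal of definition of R⁺: the norm topology is (x)-adic
    (hadic : (∀ N : ℕ, ∃ δ : ℝ, 0 < δ ∧ ∀ s : S, nm s < δ →
        s ∈ Ideal.span (Set.range x) ^ N) ∧
      ∀ δ : ℝ, 0 < δ → ∃ N : ℕ, ∀ s ∈ Ideal.span (Set.range x) ^ N, nm s < δ) :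
    -- Teichmüller coordinates of a Witt vector, via the inverse of Frobenius
    let tc : WittVector p S → ℕ → S := fun w n =>
      (Function.invFun fun y : S => y ^ p)^[n] (w.coeff n)
    let G : WittVector p S → ℝ := fun w => ⨆ n, nm (tc w n)
    let I₁ : Ideal (WittVector p S) :=
      Ideal.span (Set.range fun i => WittVector.teichmuller p (x i))
    let I₂ : Ideal (WittVector p S) :=
      Ideal.span (insert (p : WittVector p S)
        (Set.range fun i => WittVector.teichmuller p (x i)))
    -- the Gauss norm induces the ([x₀],…,[x_m])-adic topology:
    ((∀ N : ℕ, ∃ δ : ℝ, 0 < δ ∧ ∀ w : WittVector p S, G w < δ → w ∈ I₁ ^ N) ∧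
      (∀ δ : ℝ, 0 < δ → ∃ N : ℕ, ∀ w ∈ I₁ ^ N, G w < δ)) ∧
    -- the weighted Gauss norm induces the (p,[x₀],…,[x_m])-adic topology:
    ∀ ρ : ℝ, 0 < ρ → ρ < 1 →
      let Gρ : WittVector p S → ℝ := fun w => ⨆ n, ρ ^ n * nm (tc w n)
      (∀ N : ℕ, ∃ δ : ℝ, 0 < δ ∧ ∀ w : WittVector p S, Gρ w < δ → w ∈ I₂ ^ N) ∧
      (∀ δ : ℝ, 0 < δ → ∃ N : ℕ, ∀ w ∈ I₂ ^ N, Gρ w < δ) := by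
  open WittVector in
  intro tc G I₁ I₂
  have : PerfectRing S p := ⟨hperfS⟩
  have h0 : nm 0 = 0 := (heq0 0).2 rfl
  let f := RingSeminorm.ofSubLeMax hnonneg h0 hna hsm
  have hf := isNonarchimedean_of_sub_le_max hnonneg h0 hna
  have htc : ∀ w, teichmullerSeries p (tc w) = w := teichmullerSeries_iterate_invFun hperfS.2
  have hbdd : ∀ ρ, 0 ≤ ρ → ρ ≤ 1 → ∀ w, BddAbove (Set.range fun n => ρ ^ n * nm (tc w n)) :=
    fun ρ hρ hρ1 w => ⟨1, Set.forall_mem_range.2 fun n =>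
      mul_le_one₀ (pow_le_one₀ hρ hρ1) (hnonneg _) (hle1 _)⟩
  obtain ⟨N₁, hN₁⟩ := hadic.2 1 one_pos
  obtain ⟨ε, hε0, hε1, hxε⟩ := exists_forall_le_lt_one_of_span_pow hnonneg hpm x hN₁
  refine ⟨⟨fun N => ?_, fun δ hδ => ?_⟩, fun ρ hρ hρ1 => ⟨fun N => ?_, fun δ hδ => ?_⟩⟩
  · obtain ⟨δ, hδ, h⟩ := hadic.1 (Fintype.card (Fin (m + 1)) * N)
    refine ⟨δ, hδ, fun w hw => htc w ▸ teichmullerSeries_mem_span_teichmuller_pow x N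
      fun n => h _ ?_⟩
    simpa using (le_ciSup (hbdd 1 zero_le_one le_rfl w) n).trans_lt (by simpa using hw)
  · obtain ⟨N, hN⟩ := exists_pow_lt_of_lt_one hδ hε1
    refine ⟨N, fun w hw => lt_of_le_of_lt ?_ hN⟩
    simpa [f] using iSup_mul_le_of_teichmullerSeries_mem_span_pow f hf hle1 hpm one_pos le_rfl
      hε0 (by rintro _ ⟨i, rfl⟩ c - y hy; exact teichmuller_mul_mem_gaussBall f (hxε i) hy)
      (htc w ▸ hw)
  · obtain ⟨δ, hδ, h⟩ := hadic.1 (Fintype.card (Fin (m + 1)) * N)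
    refine ⟨δ * ρ ^ N, by positivity, fun w hw =>
      htc w ▸ teichmullerSeries_mem_span_insert_p_pow x N fun n hn => h _ ?_⟩
    have hwn := (le_ciSup (hbdd ρ hρ.le hρ1.le w) n).trans_lt hw
    refine lt_of_mul_lt_mul_left (hwn.trans_le ?_) (pow_nonneg hρ.le n)
    rw [mul_comm]
    exact mul_le_mul_of_nonneg_right (pow_le_pow_of_le_one hρ.le hρ1.le hn.le) hδ.le
  · obtain ⟨N, hN⟩ := exists_pow_lt_of_lt_one hδ (max_lt hε1 hρ1)
    refine ⟨N, fun w hw => lt_of_le_of_lt ?_ hN⟩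
    refine iSup_mul_le_of_teichmullerSeries_mem_span_pow f hf hle1 hpm hρ hρ1.le
      (hε0.trans (le_max_left ε ρ)) ?_ (htc w ▸ hw)
    rintro g (rfl | ⟨i, rfl⟩) c hc y hy
    · exact p_mul_mem_gaussBall f hρ (le_max_right ε ρ) hc hy
    · exact teichmuller_mul_mem_gaussBall f ((hxε i).trans (le_max_left ε ρ)) hy

/-- For `(R, R⁺)` an analytic perfectoid pair of characteristic `p` with ideal of
definition `(x₀,…,x_m) ⊂ R⁺`, the Gauss norm on `W(R⁺)` induces the
`([x₀],…,[x_m])`-adic topology, and the weighted Gauss norm (with `|p| = ρ`)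
induces the `(p,[x₀],…,[x_m])`-adic topology. -/
theorem stmt16 (p : ℕ) [Fact p.Prime] {S : Type*} [CommRing S] [CharP S p]
    -- S = R⁺, a perfect uniform Banach ring with all elements of norm ≤ 1
    (nm : S → ℝ) (hnonneg : ∀ s, 0 ≤ nm s) (heq0 : ∀ s, nm s = 0 ↔ s = 0)
    (hna : ∀ s t, nm (s - t) ≤ max (nm s) (nm t))
    (hsm : ∀ s t, nm (s * t) ≤ nm s * nm t)
    (hpm : ∀ (s : S) (n : ℕ), 1 ≤ n → nm (s ^ n) = nm s ^ n)
    (hle1 : ∀ s, nm s ≤ 1)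
    (hperfS : Function.Bijective fun s : S => s ^ p)
    -- the ambient analytic perfectoid ring R with R⁺ its ring of definition
    {R : Type*} [CommRing R] [CharP R p] (nmR : R → ℝ)
    (ι : S →+* R) (hινm : ∀ s, nmR (ι s) = nm s)
    (hball : ∀ r : R, nmR r ≤ 1 → ∃ s : S, ι s = r)
    (m : ℕ) (x : Fin (m + 1) → S)
    -- (x₀,…,x_m) is an ideal of definition of R⁺: the norm topology is (x)-adic
    (hadic : (∀ N : ℕ, ∃ δ : ℝ, 0 < δ ∧ ∀ s : S, nm s < δ →
        s ∈ Ideal.span (Set.range x) ^ N) ∧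
      ∀ δ : ℝ, 0 < δ → ∃ N : ℕ, ∀ s ∈ Ideal.span (Set.range x) ^ N, nm s < δ)
    -- analyticity: the x_i generate the unit ideal of R
    (hspanR : Ideal.span (Set.range fun i => ι (x i)) = ⊤) :
    -- Teichmüller coordinates of a Witt vector, via the inverse of Frobenius
    let tc : WittVector p S → ℕ → S := fun w n =>
      (Function.invFun fun y : S => y ^ p)^[n] (w.coeff n)
    let G : WittVector p S → ℝ := fun w => ⨆ n, nm (tc w n)
    let I₁ : Ideal (WittVector p S) :=
      Ideal.span (Set.range fun i => WittVector.teichmuller p (x i))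
    let I₂ : Ideal (WittVector p S) :=
      Ideal.span (insert (p : WittVector p S)
        (Set.range fun i => WittVector.teichmuller p (x i)))
    -- the Gauss norm induces the ([x₀],…,[x_m])-adic topology:
    ((∀ N : ℕ, ∃ δ : ℝ, 0 < δ ∧ ∀ w : WittVector p S, G w < δ → w ∈ I₁ ^ N) ∧
      (∀ δ : ℝ, 0 < δ → ∃ N : ℕ, ∀ w ∈ I₁ ^ N, G w < δ)) ∧
    -- the weighted Gauss norm induces the (p,[x₀],…,[x_m])-adic topology:
    ∀ ρ : ℝ, 0 < ρ → ρ < 1 →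
      let Gρ : WittVector p S → ℝ := fun w => ⨆ n, ρ ^ n * nm (tc w n)
      (∀ N : ℕ, ∃ δ : ℝ, 0 < δ ∧ ∀ w : WittVector p S, Gρ w < δ → w ∈ I₂ ^ N) ∧
      (∀ δ : ℝ, 0 < δ → ∃ N : ℕ, ∀ w ∈ I₂ ^ N, Gρ w < δ) :=
  stmt16_general p nm hnonneg heq0 hna hsm hpm hle1 hperfS m x hadic
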